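/- Let e : (0,∞) → ℝ be differentiable and let σ : (0,∞) → ℝ satisfy σ′(x) = e′(x)/x for all x > 0. Define h(θ) = 1 + e(θ) + θ and F(z) = z·h(1/z) − σ(1/z) for z > 0. Then F′(z) = 1 + e(1/z) for all z > 0, and consequently for all a, b > 0, F(b) − F(a) = (b−a)·(1 + ∫₀¹ e(1/(a + s(b−a))) ds). In particular, when a ≠ b, the quantity E := (F(b) − F(a))/(b−a) equals 1 + ∫₀¹ e(1/(a+s(b−a))) ds, which is consistent with 1 + e. -/

import Mathlib

/-!
Writing `K z = z e(1/z) - σ(1/z)`, the chain rule gives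
`K'(z) = e(1/z) - e'(1/z)/z + e'(1/z)/z = e(1/z)`: the entropy relation `σ' = e'/θ` makes the
`e'` terms cancel. Since `F z = K z + z + 1`, this gives `F' = 1 + e(1/z)`, and the integral
formula is the fundamental theorem of calculus along the segment `s ↦ a + s (b - a)`, which stays
in `(0, ∞)`.
-/

open Set

theorem sub_eq_mul_integral_comp_segment {F g : ℝ → ℝ} {a b : ℝ}
    (hF : ∀ x ∈ uIcc a b, HasDerivAt F (g x) x) (hg : ContinuousOn g (uIcc a b)) :
    F b - F a = (b - a) * ∫ s in (0 : ℝ)..1, g (a + s * (b - a)) := by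
  have hrescale := intervalIntegral.smul_integral_comp_add_mul g (a := 0) (b := 1) (b - a) a
  simp only [mul_zero, add_zero, mul_one, add_sub_cancel, smul_eq_mul] at hrescale
  simp_rw [mul_comm _ (b - a), hrescale]
  exact (intervalIntegral.integral_eq_sub_of_hasDerivAt hF hg.intervalIntegrable).symm

theorem hasDerivAt_mul_comp_one_div_sub {e σ : ℝ → ℝ} {d z : ℝ} (hz : z ≠ 0)
    (he : HasDerivAt e d (1 / z)) (hσ : HasDerivAt σ (d / (1 / z)) (1 / z)) :
    HasDerivAt (fun x => x * e (1 / x) - σ (1 / x)) (e (1 / z)) z := by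
  have hinv : HasDerivAt (fun x : ℝ => 1 / x) (-(1 / z ^ 2)) z := by
    simpa only [one_div] using hasDerivAt_inv hz
  refine (((hasDerivAt_id' z).mul (he.comp z hinv)).sub (hσ.comp z hinv)).congr_deriv ?_
  simp only [Function.comp_apply]
  field_simp
  ring

theorem stmt7 (e e' σ : ℝ → ℝ)
    (he : ∀ x > (0 : ℝ), HasDerivAt e (e' x) x)
    (hσ : ∀ x > (0 : ℝ), HasDerivAt σ (e' x / x) x) :
    let h : ℝ → ℝ := fun θ => 1 + e θ + θ
    let F : ℝ → ℝ := fun z => z * h (1 / z) - σ (1 / z)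
    (∀ z > (0 : ℝ), HasDerivAt F (1 + e (1 / z)) z) ∧
      (∀ a b : ℝ, 0 < a → 0 < b →
        F b - F a = (b - a) * (1 + ∫ s in (0 : ℝ)..1, e (1 / (a + s * (b - a))))) ∧
      (∀ a b : ℝ, 0 < a → 0 < b → a ≠ b →
        (F b - F a) / (b - a) = 1 + ∫ s in (0 : ℝ)..1, e (1 / (a + s * (b - a)))) := by
  intro h F
  set K : ℝ → ℝ := fun z => z * e (1 / z) - σ (1 / z)
  have hFK : ∀ z ≠ 0, F z = K z + z + 1 := by
    intro z hz
    simp only [F, h, K]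
    field_simp
    ring
  have hK : ∀ z > (0 : ℝ), HasDerivAt K (e (1 / z)) z := fun z hz =>
    hasDerivAt_mul_comp_one_div_sub hz.ne' (he _ (by positivity)) (hσ _ (by positivity))
  have hF : ∀ z > (0 : ℝ), HasDerivAt F (1 + e (1 / z)) z := by
    intro z hz
    have hFK_near : F =ᶠ[nhds z] fun x => K x + x + 1 :=
      (eventually_ne_nhds hz.ne').mono hFK
    exact (((hK z hz).add (hasDerivAt_id z)).add_const 1).congr_of_eventuallyEq hFK_near
      |>.congr_deriv (by ring)
  have hdiff : ∀ a b : ℝ, 0 < a → 0 < b →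
      F b - F a = (b - a) * (1 + ∫ s in (0 : ℝ)..1, e (1 / (a + s * (b - a)))) := by
    intro a b ha hb
    have hpos : uIcc a b ⊆ Ioi 0 := ordConnected_Ioi.uIcc_subset ha hb
    have hcont : ContinuousOn (fun x => e (1 / x)) (uIcc a b) := fun x hx =>
      ((he _ (one_div_pos.2 (hpos hx))).continuousAt.comp
        (continuousAt_const.div continuousAt_id (hpos hx).ne')).continuousWithinAt
    have hK_seg := sub_eq_mul_integral_comp_segment (fun x hx => hK x (hpos hx)) hcont
    rw [hFK b hb.ne', hFK a ha.ne']
    linear_combination hK_seg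
  refine ⟨hF, hdiff, fun a b ha hb hab => ?_⟩
  rw [hdiff a b ha hb, mul_div_cancel_left₀ _ (sub_ne_zero.2 hab.symm)]
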